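/- arXiv:2601.17112 — 3 statements merged into one kernel-verified Lean document; each statement's English description precedes it below -/
import Mathlib

section
/- Every third-order real tensor 𝒜 ∈ ℝ^{m×n×p} admits an ℒ-SVD: there exist an orthogonal tensor 𝒰 ∈ ℝ^{m×m×p}, an orthogonal tensor 𝒱 ∈ ℝ^{n×n×p}, and an f-diagonal tensor 𝒮 ∈ ℝ^{m×n×p} (all frontal slices diagonal in the transform domain) such that 𝒜 = 𝒰 ∗ 𝒮 ∗ 𝒱ᵀ. -/
open Finset Matrix

/-- A third-order real tensor. -/
abbrev Tensor (m n p : ℕ) := Fin m → Fin n → Fin p → ℝ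

/-- Mode-3 product of a third-order tensor with a `p × p` matrix:
`ℒ(𝒜) = 𝒜 ×₃ Z`, applying `Z` along each tube fiber. -/
noncomputable def modeThree {m n p : ℕ} (Z : Matrix (Fin p) (Fin p) ℝ)
    (A : Tensor m n p) : Tensor m n p :=
  fun i j k => ∑ t, Z k t * A i j t

/-- The `k`-th frontal slice of a tensor. -/
def fslice {m n p : ℕ} (A : Tensor m n p) (k : Fin p) :
    Matrix (Fin m) (Fin n) ℝ :=
  Matrix.of fun i j => A i j k

/-- The ℒ-product: slicewise matrix multiplication in the transform domain,
followed by the inverse transform. -/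
noncomputable def lprod {m l n p : ℕ} (Z Zinv : Matrix (Fin p) (Fin p) ℝ)
    (A : Tensor m l p) (B : Tensor l n p) : Tensor m n p :=
  modeThree Zinv (fun i j k => ∑ t, modeThree Z A i t k * modeThree Z B t j k)

/-- The ℒ-identity tensor: `ℒ⁻¹` of the tensor all of whose frontal slices
are the identity matrix. -/
noncomputable def idT (m p : ℕ) (Zinv : Matrix (Fin p) (Fin p) ℝ) :
    Tensor m m p :=
  modeThree Zinv (fun i j _ => if i = j then (1 : ℝ) else 0)

/-- The ℒ-transpose: slicewise matrix transposition in the transform domain. -/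
noncomputable def transpT {m n p : ℕ} (Z Zinv : Matrix (Fin p) (Fin p) ℝ)
    (A : Tensor m n p) : Tensor n m p :=
  modeThree Zinv (fun i j k => modeThree Z A j i k)

lemma matrix_svd (m n : ℕ) (M : Matrix (Fin m) (Fin n) ℝ) :
    ∃ (U : Matrix (Fin m) (Fin m) ℝ) (S : Matrix (Fin m) (Fin n) ℝ)
      (V : Matrix (Fin n) (Fin n) ℝ),
      Uᵀ * U = 1 ∧ U * Uᵀ = 1 ∧ Vᵀ * V = 1 ∧ V * Vᵀ = 1 ∧
      (∀ (i : Fin m) (j : Fin n), (i : ℕ) ≠ (j : ℕ) → S i j = 0) ∧ M = U * S * Vᵀ := by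
  classical
  set B := Mᵀ * M with hBdef
  have hB : B.IsHermitian := isHermitian_conjTranspose_mul_self M
  have hPSD : B.PosSemidef := posSemidef_conjTranspose_mul_self M
  set V0 : Matrix (Fin n) (Fin n) ℝ := (hB.eigenvectorUnitary : Matrix (Fin n) (Fin n) ℝ) with hV0
  set d0 : Fin n → ℝ := hB.eigenvalues with hd0
  have hspec : B = V0 * diagonal d0 * V0ᵀ := by
    have := hB.spectral_theorem; simpa [star_eq_conjTranspose] using this
  have hV0o : V0ᵀ * V0 = 1 := by
    have := (Matrix.mem_unitaryGroup_iff').mp hB.eigenvectorUnitary.2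
    simpa [star_eq_conjTranspose] using this
  have hV0o' : V0 * V0ᵀ = 1 := by
    have := (Matrix.mem_unitaryGroup_iff).mp hB.eigenvectorUnitary.2
    simpa [star_eq_conjTranspose] using this
  have hd0nn : ∀ j, 0 ≤ d0 j := fun j => hPSD.eigenvalues_nonneg j
  -- sort eigenvalues descending
  set e : Equiv.Perm (Fin n) := Tuple.sort (fun j => -d0 j) with he
  set d : Fin n → ℝ := d0 ∘ e with hd
  have hdnn : ∀ j, 0 ≤ d j := fun j => hd0nn _
  have hanti : Antitone d := by
    intro a b hab
    have := Tuple.monotone_sort (fun j => -d0 j) hab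
    simp only [Function.comp_apply] at this
    simpa [hd] using neg_le_neg_iff.mp this
  set V : Matrix (Fin n) (Fin n) ℝ := V0.submatrix id e with hV
  have hVt : Vᵀ = V0ᵀ.submatrix e id := by
    ext i j; simp [hV, transpose_apply, submatrix_apply]
  have hVo : Vᵀ * V = 1 := by
    rw [hVt, hV]
    have : V0ᵀ.submatrix e id * V0.submatrix id e
        = (V0ᵀ * V0).submatrix e e := by
      have := submatrix_mul_equiv V0ᵀ V0 e (Equiv.refl (Fin n)) e
      simpa using this
    rw [this, hV0o, submatrix_one_equiv]
  have hVo' : V * Vᵀ = 1 := by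
    rw [hVt, hV]
    have : V0.submatrix id e * V0ᵀ.submatrix e id
        = (V0 * V0ᵀ).submatrix id id := by
      have := submatrix_mul_equiv V0 V0ᵀ (Equiv.refl (Fin n)) e (Equiv.refl (Fin n))
      simpa using this
    rw [this, hV0o']; rfl
  have hVspec : B = V * diagonal d * Vᵀ := by
    have h1 : diagonal d = (diagonal d0).submatrix e e := (submatrix_diagonal_equiv d0 e).symm
    rw [h1, hVt, hV]
    have h2 : V0.submatrix id e * (diagonal d0).submatrix e e
        = (V0 * diagonal d0).submatrix id e := by
      have := submatrix_mul_equiv V0 (diagonal d0) (Equiv.refl (Fin n)) e e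
      simpa using this
    have h3 : (V0 * diagonal d0).submatrix id e * V0ᵀ.submatrix e id
        = (V0 * diagonal d0 * V0ᵀ).submatrix id id := by
      have := submatrix_mul_equiv (V0 * diagonal d0) V0ᵀ (Equiv.refl (Fin n)) e (Equiv.refl (Fin n))
      simpa using this
    rw [h2, h3, ← hspec]; rfl
  set W : Matrix (Fin m) (Fin n) ℝ := M * V with hW
  have hWtW : Wᵀ * W = diagonal d := by
    have h0 : Wᵀ * W = Vᵀ * B * V := by
      rw [hW, transpose_mul, hBdef]
      simp only [Matrix.mul_assoc]
    rw [h0, hVspec]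
    have h1 : Vᵀ * (V * diagonal d * Vᵀ) * V
        = Vᵀ * V * diagonal d * (Vᵀ * V) := by
      simp only [Matrix.mul_assoc]
    rw [h1, hVo, Matrix.one_mul, Matrix.mul_one]
  have hWcol : ∀ j j' : Fin n, (∑ i, W i j * W i j') = if j = j' then d j else 0 := by
    intro j j'
    have := congrFun (congrFun hWtW j) j'
    simpa [Matrix.mul_apply, Matrix.diagonal_apply, Matrix.transpose_apply] using this
  have hWzero : ∀ j : Fin n, d j = 0 → ∀ i, W i j = 0 := by
    intro j hj i
    have hsum : (∑ i, W i j * W i j) = 0 := by rw [hWcol j j]; simp [hj]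
    have := (Finset.sum_eq_zero_iff_of_nonneg (fun i _ => mul_self_nonneg (W i j))).mp hsum
      i (Finset.mem_univ i)
    exact (mul_self_eq_zero).mp this
  set σ : Fin n → ℝ := fun j => Real.sqrt (d j) with hσdef
  have hσsq : ∀ j, σ j * σ j = d j := fun j => Real.mul_self_sqrt (hdnn j)
  have hσne : ∀ j, d j ≠ 0 → σ j ≠ 0 := by
    intro j hj h0
    exact hj (by rw [← hσsq j, h0, mul_zero])
  -- orthonormality of the normalized nonzero columns
  set u : Fin n → EuclideanSpace ℝ (Fin m) := fun j => (σ j)⁻¹ • WithLp.toLp 2 (W · j) with hu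
  have honb : ∀ i j : Fin n, d i ≠ 0 → d j ≠ 0 →
      (inner ℝ (u i) (u j) : ℝ) = if i = j then 1 else 0 := by
    intro i j hi hj
    have : (inner ℝ (u i) (u j) : ℝ) = (σ i)⁻¹ * (σ j)⁻¹ * ∑ k, W k i * W k j := by
      simp only [hu, PiLp.inner_apply, PiLp.smul_apply, PiLp.toLp_apply, smul_eq_mul, RCLike.inner_apply,
        starRingEnd_apply, star_trivial, Finset.mul_sum]
      apply Finset.sum_congr rfl; intro k _
      ring
    rw [this, hWcol]
    by_cases hij : i = j
    · subst hij
      simp only [↓reduceIte]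
      rw [← hσsq i]
      field_simp [hσne i hi]
    · simp [hij]
  -- every index with a nonzero eigenvalue lies below m
  have hcard : ∀ j : Fin n, d j ≠ 0 → (j : ℕ) < m := by
    intro j hj
    have hjn : (j : ℕ) + 1 ≤ n := j.2
    set w : Fin ((j : ℕ) + 1) → EuclideanSpace ℝ (Fin m) := fun i => u (Fin.castLE hjn i) with hw
    have hwd : ∀ i : Fin ((j : ℕ) + 1), d (Fin.castLE hjn i) ≠ 0 := by
      intro i
      have hle : Fin.castLE hjn i ≤ j := by
        simp [Fin.le_def, Nat.lt_succ_iff.mp i.2]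
      have := hanti hle
      have hpos : 0 < d j := lt_of_le_of_ne (hdnn j) (Ne.symm hj)
      exact ne_of_gt (lt_of_lt_of_le hpos this)
    have hwon : Orthonormal ℝ w := by
      rw [orthonormal_iff_ite]
      intro a b
      rw [hw]
      rw [honb _ _ (hwd a) (hwd b)]
      congr 1
      simp [Fin.ext_iff]
    have hli := hwon.linearIndependent
    have := hli.fintype_card_le_finrank
    simpa [finrank_euclideanSpace_fin] using this
  -- extend to an orthonormal basis
  set sSet : Set (Fin m) := {j | ∃ h : (j : ℕ) < n, d ⟨(j : ℕ), h⟩ ≠ 0} with hsSet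
  set v : Fin m → EuclideanSpace ℝ (Fin m) := fun j =>
    if h : (j : ℕ) < n then u ⟨(j : ℕ), h⟩ else 0 with hv
  have hvon : Orthonormal ℝ (sSet.restrict v) := by
    rw [orthonormal_iff_ite]
    rintro ⟨a, ha, hda⟩ ⟨b, hb, hdb⟩
    simp only [Set.restrict_apply, Set.restrict, hv, dif_pos ha, dif_pos hb]
    rw [honb _ _ hda hdb]
    congr 1
    simp [Fin.ext_iff, Subtype.ext_iff]
  obtain ⟨bas, hbas⟩ := hvon.exists_orthonormalBasis_extension_of_card_eq
    (by simp [finrank_euclideanSpace_fin])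
  set U : Matrix (Fin m) (Fin m) ℝ := Matrix.of fun i j => bas j i with hU
  have hUo : Uᵀ * U = 1 := by
    ext a b
    have := orthonormal_iff_ite.mp bas.orthonormal a b
    simp only [PiLp.inner_apply, RCLike.inner_apply, starRingEnd_apply, star_trivial] at this
    simpa [Matrix.mul_apply, hU, Matrix.one_apply, mul_comm] using this
  have hUo' : U * Uᵀ = 1 := mul_eq_one_comm.mp hUo
  set S : Matrix (Fin m) (Fin n) ℝ :=
    Matrix.of fun i j => if (i : ℕ) = (j : ℕ) then σ j else 0 with hS
  have hUS : U * S = W := by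
    ext i j
    rw [Matrix.mul_apply]
    by_cases hjm : (j : ℕ) < m
    · have hsum : (∑ k, U i k * S k j) = U i ⟨(j : ℕ), hjm⟩ * σ j := by
        rw [Finset.sum_eq_single ⟨(j : ℕ), hjm⟩]
        · simp [hS]
        · intro k _ hk
          have : (k : ℕ) ≠ (j : ℕ) := by
            intro h; exact hk (Fin.ext h)
          simp [hS, this]
        · intro h; exact absurd (Finset.mem_univ _) h
      rw [hsum]
      by_cases hdj : d j = 0
      · rw [hWzero j hdj i]
        simp [hσdef, hdj]
      · have hmem : (⟨(j : ℕ), hjm⟩ : Fin m) ∈ sSet := by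
          refine ⟨j.2, ?_⟩
          convert hdj using 2
        have hbj : bas ⟨(j : ℕ), hjm⟩ = v ⟨(j : ℕ), hjm⟩ := hbas _ hmem
        have hveq : v ⟨(j : ℕ), hjm⟩ = u j := by
          rw [hv]
          simp only [dif_pos j.2]
        rw [hU]
        show bas ⟨(j : ℕ), hjm⟩ i * σ j = W i j
        rw [hbj, hveq, hu]
        simp only [PiLp.smul_apply, PiLp.toLp_apply, smul_eq_mul]
        field_simp [hσne j hdj]
    · have hdj : d j = 0 := by
        by_contra h
        exact hjm (hcard j h)
      rw [hWzero j hdj i]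
      apply Finset.sum_eq_zero
      intro k _
      have : (k : ℕ) ≠ (j : ℕ) := by
        intro h
        exact hjm (h ▸ k.2)
      simp [hS, this]
  refine ⟨U, S, V, hUo, hUo', hVo, hVo', ?_, ?_⟩
  · intro i j hij
    simp [hS, hij]
  · rw [hUS, hW, Matrix.mul_assoc, hVo', Matrix.mul_one]

/-- Applying `Z` and then `W` along mode 3 is the identity when `Z * W = 1`. -/
lemma modeThree_inv {m n p : ℕ} (Z W : Matrix (Fin p) (Fin p) ℝ) (h : Z * W = 1)
    (A : Tensor m n p) : modeThree Z (modeThree W A) = A := by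
  funext i j k
  simp only [modeThree]
  have h1 : ∀ t, Z k t * ∑ s, W t s * A i j s = ∑ s, Z k t * W t s * A i j s := by
    intro t; rw [Finset.mul_sum]; apply Finset.sum_congr rfl; intro s _; ring
  simp only [h1]
  rw [Finset.sum_comm]
  have h2 : ∀ s, (∑ t, Z k t * W t s * A i j s) = (Z * W) k s * A i j s := by
    intro s; rw [Matrix.mul_apply, Finset.sum_mul]
  simp only [h2, h, Matrix.one_apply]
  simp [Finset.sum_ite_eq]

/-- Every third-order real tensor admits an ℒ-SVD `𝒜 = 𝒰 ∗ 𝒮 ∗ 𝒱ᵀ` with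
`𝒰, 𝒱` orthogonal tensors and `𝒮` f-diagonal in the transform domain. -/
theorem lsvd_exists {m n p : ℕ} (Z : Matrix (Fin p) (Fin p) ℝ)
    (hZ : Z * Zᵀ = 1) (hZ' : Zᵀ * Z = 1) (A : Tensor m n p) :
    ∃ (U : Tensor m m p) (S : Tensor m n p) (V : Tensor n n p),
      (lprod Z Zᵀ (transpT Z Zᵀ U) U = idT m p Zᵀ ∧
       lprod Z Zᵀ U (transpT Z Zᵀ U) = idT m p Zᵀ) ∧
      (lprod Z Zᵀ (transpT Z Zᵀ V) V = idT n p Zᵀ ∧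
       lprod Z Zᵀ V (transpT Z Zᵀ V) = idT n p Zᵀ) ∧
      (∀ (i : Fin m) (j : Fin n) (k : Fin p),
        (i : ℕ) ≠ (j : ℕ) → modeThree Z S i j k = 0) ∧
      A = lprod Z Zᵀ U (lprod Z Zᵀ S (transpT Z Zᵀ V)) := by
  classical
  choose Uc Sc Vc hUo hUo' hVo hVo' hSd hfac using
    fun k => matrix_svd m n (fslice (modeThree Z A) k)
  set Uhat : Tensor m m p := fun i j k => Uc k i j with hUhatdef
  set Shat : Tensor m n p := fun i j k => Sc k i j with hShatdef
  set Vhat : Tensor n n p := fun i j k => Vc k i j with hVhatdef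
  refine ⟨modeThree Zᵀ Uhat, modeThree Zᵀ Shat, modeThree Zᵀ Vhat, ⟨?_, ?_⟩, ⟨?_, ?_⟩, ?_, ?_⟩
  · -- Uᵀ * U = I
    unfold lprod idT transpT
    simp only [modeThree_inv Z Zᵀ hZ]
    apply congrArg
    funext i j k
    have := congrFun (congrFun (hUo k) i) j
    simpa [Matrix.mul_apply, Matrix.one_apply, hUhatdef] using this
  · -- U * Uᵀ = I
    unfold lprod idT transpT
    simp only [modeThree_inv Z Zᵀ hZ]
    apply congrArg
    funext i j k
    have := congrFun (congrFun (hUo' k) i) j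
    simpa [Matrix.mul_apply, Matrix.one_apply, hUhatdef] using this
  · -- Vᵀ * V = I
    unfold lprod idT transpT
    simp only [modeThree_inv Z Zᵀ hZ]
    apply congrArg
    funext i j k
    have := congrFun (congrFun (hVo k) i) j
    simpa [Matrix.mul_apply, Matrix.one_apply, hVhatdef] using this
  · -- V * Vᵀ = I
    unfold lprod idT transpT
    simp only [modeThree_inv Z Zᵀ hZ]
    apply congrArg
    funext i j k
    have := congrFun (congrFun (hVo' k) i) j
    simpa [Matrix.mul_apply, Matrix.one_apply, hVhatdef] using this
  · -- f-diagonality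
    intro i j k hij
    rw [modeThree_inv Z Zᵀ hZ Shat]
    exact hSd k i j hij
  · -- the factorization
    unfold lprod transpT
    simp only [modeThree_inv Z Zᵀ hZ]
    have key : (fun i j k => ∑ t, Uhat i t k *
        (∑ r, Shat t r k * Vhat j r k)) = modeThree Z A := by
      funext i j k
      have h1 := congrFun (congrFun (hfac k) i) j
      simp only [fslice, Matrix.mul_apply, Matrix.transpose_apply, Matrix.of_apply] at h1
      rw [h1]
      simp only [hUhatdef, hShatdef, hVhatdef, Finset.mul_sum, Finset.sum_mul]
      rw [Finset.sum_comm]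
      apply Finset.sum_congr rfl
      intro x _
      apply Finset.sum_congr rfl
      intro t _
      ring
    rw [key, modeThree_inv Zᵀ Z hZ' A]
end

section
/- Multiplication by an orthogonal tensor preserves the Frobenius norm under the ℒ-product with orthogonal transform Z: if 𝒬 ∈ ℝ^{m×m×p} is orthogonal, then ‖𝒬 ∗ 𝒜‖_F = ‖𝒜‖_F for every 𝒜 ∈ ℝ^{m×n×p}. -/
open Finset Matrix

lemma sum_sq_orth {q : ℕ} (M : Matrix (Fin q) (Fin q) ℝ) (hM : Mᵀ * M = 1)
    (x : Fin q → ℝ) : ∑ k, (∑ t, M k t * x t) ^ 2 = ∑ k, (x k) ^ 2 := by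
  have h1 : (M.mulVec x) ⬝ᵥ (M.mulVec x) = x ⬝ᵥ x := by
    rw [Matrix.dotProduct_mulVec, ← Matrix.mulVec_transpose,
      Matrix.mulVec_mulVec, hM, Matrix.one_mulVec]
  simpa [dotProduct, Matrix.mulVec, sq] using h1

lemma modeThree_comp {m n p : ℕ} (M N : Matrix (Fin p) (Fin p) ℝ)
    (A : Tensor m n p) : modeThree M (modeThree N A) = modeThree (M * N) A := by
  funext i j k
  simp only [modeThree, Matrix.mul_apply, Finset.mul_sum, Finset.sum_mul]
  rw [Finset.sum_comm]
  simp [mul_assoc]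

lemma modeThree_one {m n p : ℕ} (A : Tensor m n p) :
    modeThree (1 : Matrix (Fin p) (Fin p) ℝ) A = A := by
  funext i j k
  simp [modeThree, Matrix.one_apply]

lemma sum_rot {α β γ : Type*} [Fintype α] [Fintype β] [Fintype γ]
    (f : α → β → γ → ℝ) :
    ∑ a, ∑ b, ∑ c, f a b c = ∑ b, ∑ c, ∑ a, f a b c := by
  rw [Finset.sum_comm]
  exact Finset.sum_congr rfl fun b _ => Finset.sum_comm

/-- Multiplication by an orthogonal tensor preserves the Frobenius norm under
the ℒ-product with an orthogonal transform `Z`. -/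
theorem orth_lprod_frobenius {m n p : ℕ} (Z : Matrix (Fin p) (Fin p) ℝ)
    (hZ : Z * Zᵀ = 1) (hZ' : Zᵀ * Z = 1)
    (Q : Tensor m m p)
    (hQ : lprod Z Zᵀ (transpT Z Zᵀ Q) Q = idT m p Zᵀ ∧
          lprod Z Zᵀ Q (transpT Z Zᵀ Q) = idT m p Zᵀ)
    (A : Tensor m n p) :
    Real.sqrt (∑ i : Fin m, ∑ j : Fin n, ∑ k : Fin p,
        (lprod Z Zᵀ Q A i j k) ^ 2)
      = Real.sqrt (∑ i : Fin m, ∑ j : Fin n, ∑ k : Fin p, (A i j k) ^ 2) := by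
  obtain ⟨hQ1, -⟩ := hQ
  congr 1
  have hZT : (Zᵀ)ᵀ * Zᵀ = 1 := by rwa [Matrix.transpose_transpose]
  -- transform-domain tensors
  set Qh : Tensor m m p := modeThree Z Q with hQh
  set Ah : Tensor m n p := modeThree Z A with hAh
  -- slicewise orthogonality of Qh
  have htr : modeThree Z (transpT Z Zᵀ Q) = fun i j k => Qh j i k := by
    rw [transpT, modeThree_comp, hZ, modeThree_one]
  have h1 := congrArg (modeThree Z) hQ1
  rw [lprod, idT, modeThree_comp, modeThree_comp, hZ, modeThree_one,
    modeThree_one, htr] at h1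
  have horth : ∀ (k : Fin p) (i j : Fin m),
      ∑ t, Qh t i k * Qh t j k = if i = j then (1 : ℝ) else 0 := by
    intro k i j
    exact congrFun (congrFun (congrFun h1 i) j) k
  -- the transform-domain product
  have hC : lprod Z Zᵀ Q A
      = modeThree Zᵀ (fun i j k => ∑ t, Qh i t k * Ah t j k) := rfl
  calc ∑ i, ∑ j, ∑ k, (lprod Z Zᵀ Q A i j k) ^ 2
      = ∑ i, ∑ j, ∑ k, (∑ t, Qh i t k * Ah t j k) ^ 2 := by
        rw [hC]
        refine Finset.sum_congr rfl fun i _ => Finset.sum_congr rfl fun j _ => ?_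
        exact sum_sq_orth Zᵀ hZT _
    _ = ∑ j, ∑ k, ∑ i, (∑ t, Qh i t k * Ah t j k) ^ 2 :=
        sum_rot _
    _ = ∑ j, ∑ k, ∑ i, (Ah i j k) ^ 2 := by
        refine Finset.sum_congr rfl fun j _ => Finset.sum_congr rfl fun k _ => ?_
        have hM : (Matrix.of fun a b => Qh a b k)ᵀ * (Matrix.of fun a b => Qh a b k) = 1 := by
          ext a b
          simpa [Matrix.mul_apply, Matrix.one_apply] using horth k a b
        exact sum_sq_orth (Matrix.of fun a b => Qh a b k) hM (fun t => Ah t j k)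
    _ = ∑ i, ∑ j, ∑ k, (Ah i j k) ^ 2 :=
        (sum_rot fun i j k => (Ah i j k) ^ 2).symm
    _ = ∑ i, ∑ j, ∑ k, (A i j k) ^ 2 := by
        refine Finset.sum_congr rfl fun i _ => Finset.sum_congr rfl fun j _ => ?_
        exact sum_sq_orth Z hZ' _
end

section
/- The rank-r truncation of the ℒ-SVD satisfies the error identity ‖𝒜 − 𝒜ᵣ‖_F² = Σ_{i>r} Σ_{j=1}^p σ_i^{(j)²}, where σ_i^{(j)} is the i-th singular value of the j-th transformed frontal slice, provided the transform matrix Z is orthogonal. -/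
open Finset Matrix

private lemma ortho_sum_sq {q : ℕ} (Q : Matrix (Fin q) (Fin q) ℝ) (hQ : Qᵀ * Q = 1)
    (x : Fin q → ℝ) :
    ∑ k, (∑ t, Q k t * x t) ^ 2 = ∑ k, (x k) ^ 2 := by
  have h : ∀ t s, ∑ k, Q k t * Q k s = if t = s then (1:ℝ) else 0 := by
    intro t s
    have := congrFun (congrFun hQ t) s
    simpa [Matrix.mul_apply, Matrix.transpose_apply, Matrix.one_apply] using this
  calc ∑ k, (∑ t, Q k t * x t) ^ 2
      = ∑ k, ∑ t, ∑ s, (Q k t * x t) * (Q k s * x s) := by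
        simp [sq, Finset.sum_mul_sum]
    _ = ∑ t, ∑ s, (∑ k, Q k t * Q k s) * (x t * x s) := by
        rw [Finset.sum_comm]
        refine Finset.sum_congr rfl fun t _ => ?_
        rw [Finset.sum_comm]
        refine Finset.sum_congr rfl fun s _ => ?_
        rw [Finset.sum_mul]
        exact Finset.sum_congr rfl fun k _ => by ring
    _ = ∑ t, (x t) ^ 2 := by
        simp [h, ite_mul, sq]

lemma frob_left {a b : ℕ} (U : Matrix (Fin a) (Fin a) ℝ) (hU : Uᵀ * U = 1)
    (M : Matrix (Fin a) (Fin b) ℝ) :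
    ∑ i, ∑ j, ((U * M) i j) ^ 2 = ∑ i, ∑ j, (M i j) ^ 2 := by
  rw [Finset.sum_comm, Finset.sum_comm (f := fun i j => (M i j)^2)]
  refine Finset.sum_congr rfl fun j _ => ?_
  simpa [Matrix.mul_apply] using ortho_sum_sq U hU (fun t => M t j)

lemma frob_right {a b : ℕ} (V : Matrix (Fin b) (Fin b) ℝ) (hV : Vᵀ * V = 1)
    (M : Matrix (Fin a) (Fin b) ℝ) :
    ∑ i, ∑ j, ((M * Vᵀ) i j) ^ 2 = ∑ i, ∑ j, (M i j) ^ 2 := by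
  refine Finset.sum_congr rfl fun i _ => ?_
  have := ortho_sum_sq V hV (fun t => M i t)
  simpa [Matrix.mul_apply, Matrix.transpose_apply, mul_comm] using this

/-- Error identity for the rank-`r` truncation of the ℒ-SVD with orthogonal
transform `Z`: `‖𝒜 − 𝒜ᵣ‖_F² = Σ_{i>r} Σ_j (σ_i^{(j)})²`. -/
theorem lsvd_truncation_error {m n p : ℕ} (r : ℕ)
    (Z : Matrix (Fin p) (Fin p) ℝ) (hZ : Z * Zᵀ = 1) (hZ' : Zᵀ * Z = 1)
    (A : Tensor m n p)
    (Uh : Fin p → Matrix (Fin m) (Fin m) ℝ)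
    (Vh : Fin p → Matrix (Fin n) (Fin n) ℝ)
    (σ : ℕ → Fin p → ℝ)
    (hU : ∀ j, (Uh j)ᵀ * Uh j = 1 ∧ Uh j * (Uh j)ᵀ = 1)
    (hV : ∀ j, (Vh j)ᵀ * Vh j = 1 ∧ Vh j * (Vh j)ᵀ = 1)
    (hσ0 : ∀ i j, 0 ≤ σ i j)
    (hσd : ∀ (j : Fin p) (i i' : ℕ), i ≤ i' → σ i' j ≤ σ i j)
    (hsvd : ∀ j : Fin p, fslice (modeThree Z A) j
      = Uh j * (Matrix.of fun (a : Fin m) (b : Fin n) =>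
          if (a : ℕ) = (b : ℕ) then σ (a : ℕ) j else 0) * (Vh j)ᵀ) :
    ∑ i : Fin m, ∑ j : Fin n, ∑ k : Fin p,
        (A i j k
          - modeThree Zᵀ (fun i j k =>
              (Uh k * (Matrix.of fun (a : Fin m) (b : Fin n) =>
                if (a : ℕ) = (b : ℕ) ∧ (a : ℕ) < r then σ (a : ℕ) k else 0)
                * (Vh k)ᵀ) i j) i j k) ^ 2
      = ∑ i ∈ Finset.Ico r (min m n), ∑ j : Fin p, (σ i j) ^ 2 := by
  classical
  set D : Fin p → Matrix (Fin m) (Fin n) ℝ := fun k =>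
    Matrix.of fun (a : Fin m) (b : Fin n) =>
      if (a : ℕ) = (b : ℕ) then σ (a : ℕ) k else 0 with hD
  set Dr : Fin p → Matrix (Fin m) (Fin n) ℝ := fun k =>
    Matrix.of fun (a : Fin m) (b : Fin n) =>
      if (a : ℕ) = (b : ℕ) ∧ (a : ℕ) < r then σ (a : ℕ) k else 0 with hDr
  set G : Fin m → Fin n → Fin p → ℝ := fun i j k =>
    (Uh k * Dr k * (Vh k)ᵀ) i j with hG
  set B : Fin m → Fin n → Fin p → ℝ := modeThree Zᵀ G with hB
  have hZZT : ∀ k s : Fin p, ∑ t, Z k t * Z s t = if k = s then (1:ℝ) else 0 := by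
    intro k s
    have := congrFun (congrFun hZ k) s
    simpa [Matrix.mul_apply, Matrix.transpose_apply, Matrix.one_apply] using this
  have hmodB : ∀ i j k, ∑ t, Z k t * B i j t = G i j k := by
    intro i j k
    calc ∑ t, Z k t * B i j t
        = ∑ t, ∑ s, Z k t * (Z s t * G i j s) := by
          refine Finset.sum_congr rfl fun t _ => ?_
          rw [hB]
          simp only [modeThree, Matrix.transpose_apply, Finset.mul_sum]
      _ = ∑ s, (∑ t, Z k t * Z s t) * G i j s := by
          rw [Finset.sum_comm]
          refine Finset.sum_congr rfl fun s _ => ?_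
          rw [Finset.sum_mul]
          exact Finset.sum_congr rfl fun t _ => by ring
      _ = G i j k := by simp [hZZT, ite_mul]
  have hmodA : ∀ (i : Fin m) (j : Fin n) (k : Fin p),
      ∑ t, Z k t * A i j t = (Uh k * D k * (Vh k)ᵀ) i j := by
    intro i j k
    have := congrFun (congrFun (hsvd k) i) j
    simpa [fslice, modeThree, hD] using this
  have step1 : ∀ (i : Fin m) (j : Fin n),
      (∑ k, (A i j k - B i j k) ^ 2)
        = ∑ k, ((Uh k * (D k - Dr k) * (Vh k)ᵀ) i j) ^ 2 := by
    intro i j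
    rw [← ortho_sum_sq Z hZ' (fun t => A i j t - B i j t)]
    refine Finset.sum_congr rfl fun k _ => ?_
    congr 1
    have hsplit : ∑ t, Z k t * (A i j t - B i j t)
        = (∑ t, Z k t * A i j t) - ∑ t, Z k t * B i j t := by
      rw [← Finset.sum_sub_distrib]
      exact Finset.sum_congr rfl fun t _ => by ring
    rw [hsplit, hmodA, hmodB, hG]
    simp [Matrix.sub_mul, Matrix.mul_sub, Matrix.sub_apply]
  have diag : ∀ k : Fin p,
      ∑ i : Fin m, ∑ j : Fin n, ((D k - Dr k) i j) ^ 2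
        = ∑ i ∈ Finset.Ico r (min m n), (σ i k) ^ 2 := by
    intro k
    have hent : ∀ (a : Fin m) (b : Fin n),
        ((D k - Dr k) a b) ^ 2
          = if (a : ℕ) = (b : ℕ) ∧ r ≤ (a : ℕ) then σ (a : ℕ) k ^ 2 else 0 := by
      intro a b
      simp only [Matrix.sub_apply, hD, hDr, Matrix.of_apply]
      by_cases h1 : (a : ℕ) = (b : ℕ)
      · by_cases h2 : (a : ℕ) < r
        · rw [if_pos h1, if_pos ⟨h1, h2⟩,
            if_neg (by omega : ¬((a : ℕ) = (b : ℕ) ∧ r ≤ (a : ℕ)))]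
          ring
        · rw [if_pos h1,
            if_neg (by omega : ¬((a : ℕ) = (b : ℕ) ∧ (a : ℕ) < r)),
            if_pos ⟨h1, by omega⟩]
          ring
      · rw [if_neg h1,
          if_neg (by omega : ¬((a : ℕ) = (b : ℕ) ∧ (a : ℕ) < r)),
          if_neg (by omega : ¬((a : ℕ) = (b : ℕ) ∧ r ≤ (a : ℕ)))]
        ring
    calc ∑ i : Fin m, ∑ j : Fin n, ((D k - Dr k) i j) ^ 2
        = ∑ i : Fin m, ∑ j : Fin n,
            (if (i : ℕ) = (j : ℕ) ∧ r ≤ (i : ℕ) then σ (i : ℕ) k ^ 2 else 0) := by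
          exact Finset.sum_congr rfl fun i _ =>
            Finset.sum_congr rfl fun j _ => hent i j
      _ = ∑ i ∈ Finset.range m, ∑ j ∈ Finset.range n,
            (if i = j ∧ r ≤ i then σ i k ^ 2 else 0) := by
          have h1 : (∑ i : Fin m, ∑ j : Fin n,
              if (i : ℕ) = (j : ℕ) ∧ r ≤ (i : ℕ) then σ (i : ℕ) k ^ 2 else 0)
              = ∑ i : Fin m, ∑ j ∈ Finset.range n,
                (if (i : ℕ) = j ∧ r ≤ (i : ℕ) then σ (i : ℕ) k ^ 2 else 0) := by
            refine Finset.sum_congr rfl fun i _ => ?_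
            exact Fin.sum_univ_eq_sum_range (fun j =>
              (if (i : ℕ) = j ∧ r ≤ (i : ℕ) then σ (i : ℕ) k ^ 2 else 0)) n
          rw [h1]
          exact Fin.sum_univ_eq_sum_range (fun i => ∑ j ∈ Finset.range n,
            (if i = j ∧ r ≤ i then σ i k ^ 2 else 0)) m
      _ = ∑ i ∈ Finset.range m,
            (if i ∈ Finset.range n ∧ r ≤ i then σ i k ^ 2 else 0) := by
          refine Finset.sum_congr rfl fun i _ => ?_
          simp only [ite_and]
          rw [Finset.sum_ite_eq (Finset.range n) i
            (fun _ => if r ≤ i then σ i k ^ 2 else 0)]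
      _ = ∑ i ∈ (Finset.range m).filter (fun i => i ∈ Finset.range n ∧ r ≤ i),
            σ i k ^ 2 := by rw [Finset.sum_filter]
      _ = ∑ i ∈ Finset.Ico r (min m n), (σ i k) ^ 2 := by
          congr 1
          ext i
          simp only [Finset.mem_filter, Finset.mem_range, Finset.mem_Ico,
            lt_min_iff]
          omega
  calc ∑ i : Fin m, ∑ j : Fin n, ∑ k : Fin p, (A i j k - B i j k) ^ 2
      = ∑ i : Fin m, ∑ j : Fin n, ∑ k : Fin p,
          ((Uh k * (D k - Dr k) * (Vh k)ᵀ) i j) ^ 2 :=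
        Finset.sum_congr rfl fun i _ => Finset.sum_congr rfl fun j _ => step1 i j
    _ = ∑ i : Fin m, ∑ k : Fin p, ∑ j : Fin n,
          ((Uh k * (D k - Dr k) * (Vh k)ᵀ) i j) ^ 2 :=
        Finset.sum_congr rfl fun i _ => Finset.sum_comm
    _ = ∑ k : Fin p, ∑ i : Fin m, ∑ j : Fin n,
          ((Uh k * (D k - Dr k) * (Vh k)ᵀ) i j) ^ 2 := Finset.sum_comm
    _ = ∑ k : Fin p, ∑ i ∈ Finset.Ico r (min m n), (σ i k) ^ 2 := by
        refine Finset.sum_congr rfl fun k _ => ?_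
        rw [frob_right (Vh k) (hV k).1, frob_left (Uh k) (hU k).1, diag k]
    _ = ∑ i ∈ Finset.Ico r (min m n), ∑ k : Fin p, (σ i k) ^ 2 :=
        Finset.sum_comm
end
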